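/- For all integers n ≥ 1 and a, b ≥ 0, H*_n({2}^a, 1, {2}^b, 3) = -2·∑_{k=1}^{n} (-1)^k·C(n,k)/(k^{2(a+b)+4}·C(n+k,k)) - 4·∑_{k=1}^{n} H_{k-1}(-(2b+3))·C(n,k)/(k^{2a+1}·C(n+k,k)) - 4·∑_{k=1}^{n} H_{k-1}(1)·(-1)^k·C(n,k)/(k^{2a+2b+3}·C(n+k,k)) - 8·∑_{k=1}^{n} H_{k-1}(-(2b+2), 1)·C(n,k)/(k^{2a+1}·C(n+k,k)). -/

import Mathlib

open Finset

/-- Sign factor for an alternating multiple harmonic sum entry. -/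
def aSgn (s : ℤ) : ℚ := if 0 < s then 1 else -1

/-- Alternating multiple harmonic sum `H_n(s₁,…,s_ℓ)` (strict indices). -/
def Hh : ℕ → List ℤ → ℚ
  | _, [] => 1
  | n, s :: r => ∑ k ∈ Finset.Icc 1 n, aSgn s ^ k / (k : ℚ) ^ s.natAbs * Hh (k - 1) r

/-- Alternating multiple harmonic star sum `H*_n(s₁,…,s_ℓ)` (weak indices). -/
def Hstar : ℕ → List ℤ → ℚ
  | _, [] => 1
  | n, s :: r => ∑ k ∈ Finset.Icc 1 n, aSgn s ^ k / (k : ℚ) ^ s.natAbs * Hstar k r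

/-- All compositions (ordered tuples of positive integers) of `w`. -/
def comps : ℕ → List (List ℕ)
  | 0 => [[]]
  | (w+1) => (List.range (w+1)).flatMap (fun j => (comps (w - j)).map (fun l => (j+1) :: l))
decreasing_by simp_wf <;> omega

/-- Coerce a list of naturals to a list of integers. -/
def natList (l : List ℕ) : List ℤ := l.map (fun m => (m : ℤ))

/-! Put `G(n,k) = C(n,k)/C(n+k,k)` and `B_w(n) = ∑_{k=1}^n w_k G(n,k)`. From
`G(n,k)(n+1)² = ((n+1)² - k²) G(n+1,k)` one gets `B_w(n) - B_w(n-1) = B_{k²w}(n)/n²`. Hence if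
`H*_n(s) = B_w(n)` for all `n`, the extended tuples have weights again: prepending `2` divides `w`
by `k²`, and prepending `1` sends `w` to `(w_k + 2∑_{j<k} w_j)/k`, because Abel summation against
`2k G(n,k) = (n-k+1) G(n,k-1) - (n-k) G(n,k)` gives `B_{k(w_k + 2∑_{j<k} w_j)}(n) = n B_w(n)`.
The alternating analogue of that identity, together with `∑_{k=1}^n (-1)^k G(n,k) = -1/2`, shows
that `(-1)^k (-2/k - 4 H_{k-1}(1))/k²` is a weight for `H*_n(3)`. -/

theorem Nat.cast_choose_succ_right_eq {R : Type*} [Ring R] (n k : ℕ) :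
    (n.choose (k + 1) : R) * (k + 1) = n.choose k * (n - k) := by
  rcases le_or_gt k n with h | h
  · simpa [Nat.cast_sub h] using congrArg (Nat.cast : ℕ → R) (Nat.choose_succ_right_eq n k)
  · simp [Nat.choose_eq_zero_of_lt h, Nat.choose_eq_zero_of_lt (h.trans (Nat.lt_succ_self k))]

theorem Nat.cast_choose_mul_succ_eq {R : Type*} [Ring R] (n k : ℕ) :
    (n.choose k : R) * (n + 1) = (n + 1).choose k * (n + 1 - k) := by
  rcases le_or_gt k (n + 1) with h | h
  · simpa [Nat.cast_sub h] using congrArg (Nat.cast : ℕ → R) (Nat.choose_mul_succ_eq n k)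
  · simp [Nat.choose_eq_zero_of_lt h, Nat.choose_eq_zero_of_lt (Nat.lt_of_succ_lt h)]

theorem Finset.sum_Ioc_eq_sub_of_eq_sub {M : Type*} [AddCommGroup M] {f D : ℕ → M}
    (h : ∀ k, f (k + 1) = D k - D (k + 1)) {j n : ℕ} (hjn : j ≤ n) :
    ∑ k ∈ Ioc j n, f k = D j - D n := by
  induction n, hjn using Nat.le_induction with
  | base => simp
  | succ n hjn ih => rw [sum_Ioc_succ_top hjn, ih, h]; abel

theorem Finset.sum_Icc_mul_sum_Icc_pred_comm {R : Type*} [CommSemiring R] (F g : ℕ → R) (n : ℕ) :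
    ∑ k ∈ Icc 1 n, F k * ∑ j ∈ Icc 1 (k - 1), g j = ∑ j ∈ Icc 1 n, g j * ∑ k ∈ Ioc j n, F k := by
  simp_rw [mul_sum]
  rw [sum_comm' (t' := Icc 1 n) (s' := fun j => Ioc j n)]
  · simp_rw [mul_comm]
  · intro k j
    simp only [mem_Icc, mem_Ioc]
    omega

def binomRatio (n k : ℕ) : ℚ := n.choose k / (n + k).choose k

lemma cast_add_choose_ne_zero (n k : ℕ) : ((n + k).choose k : ℚ) ≠ 0 :=
  Nat.cast_ne_zero.mpr (Nat.choose_pos (Nat.le_add_left k n)).ne'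

lemma binomRatio_zero_right (n : ℕ) : binomRatio n 0 = 1 := by simp [binomRatio]

lemma binomRatio_eq_zero_of_lt {n k : ℕ} (h : n < k) : binomRatio n k = 0 := by
  simp [binomRatio, Nat.choose_eq_zero_of_lt h]

lemma binomRatio_succ_right_mul (n k : ℕ) :
    binomRatio n (k + 1) * (n + k + 1) = binomRatio n k * (n - k) := by
  have h_num := Nat.cast_choose_succ_right_eq (R := ℚ) n k
  have h_den : ((n : ℚ) + k + 1) * (n + k).choose k = (n + (k + 1)).choose (k + 1) * (k + 1) := by
    exact_mod_cast Nat.add_one_mul_choose_eq (n + k) k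
  have := cast_add_choose_ne_zero n k
  have := cast_add_choose_ne_zero n (k + 1)
  simp only [binomRatio]
  field_simp
  linear_combination (n.choose (k + 1) : ℚ) * h_den + ((n + (k + 1)).choose (k + 1) : ℚ) * h_num

lemma binomRatio_mul_sq (n k : ℕ) :
    binomRatio n k * (n + 1) ^ 2 = ((n + 1) ^ 2 - k ^ 2) * binomRatio (n + 1) k := by
  have h_num := Nat.cast_choose_mul_succ_eq (R := ℚ) n k
  have h_den := Nat.cast_choose_mul_succ_eq (R := ℚ) (n + k) k
  have := cast_add_choose_ne_zero n k
  have := cast_add_choose_ne_zero (n + 1) k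
  simp only [binomRatio]
  field_simp
  rw [show n + 1 + k = n + k + 1 by ring]
  push_cast at h_den
  linear_combination (-(n.choose k : ℚ) * (n + 1)) * h_den
    + ((n + k).choose k * (n + k + 1) : ℚ) * h_num

lemma sum_Ioc_mul_binomRatio {j n : ℕ} (hjn : j ≤ n) :
    ∑ k ∈ Ioc j n, (k : ℚ) * binomRatio n k = (n - j) / 2 * binomRatio n j := by
  rw [sum_Ioc_eq_sub_of_eq_sub (D := fun k => (n - k) / 2 * binomRatio n k) _ hjn]
  · simp
  · intro k
    push_cast
    linear_combination binomRatio_succ_right_mul n k / 2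

lemma mul_sum_Ioc_neg_one_pow_mul_binomRatio {j n : ℕ} (hjn : j ≤ n) :
    2 * n * ∑ k ∈ Ioc j n, (-1 : ℚ) ^ k * binomRatio n k
      = -((-1) ^ j * (n - j) * binomRatio n j) := by
  rw [mul_sum,
    sum_Ioc_eq_sub_of_eq_sub (D := fun k => -((-1 : ℚ) ^ k * (n - k) * binomRatio n k)) _ hjn]
  · simp
  · intro k
    push_cast
    linear_combination (-1 : ℚ) ^ (k + 1) * binomRatio_succ_right_mul n k

lemma sum_neg_one_pow_mul_binomRatio {n : ℕ} (hn : 1 ≤ n) :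
    ∑ k ∈ Icc 1 n, (-1 : ℚ) ^ k * binomRatio n k = -1 / 2 := by
  have h := mul_sum_Ioc_neg_one_pow_mul_binomRatio (Nat.zero_le n)
  rw [← Icc_add_one_left_eq_Ioc, zero_add, binomRatio_zero_right] at h
  refine mul_left_cancel₀ (by positivity : (2 * n : ℚ) ≠ 0) ?_
  linear_combination h

def binomSum (w : ℕ → ℚ) (n : ℕ) : ℚ := ∑ k ∈ Icc 1 n, w k * binomRatio n k

lemma binomSum_congr {w w' : ℕ → ℚ} {n : ℕ} (h : ∀ k, 1 ≤ k → w k = w' k) :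
    binomSum w n = binomSum w' n :=
  sum_congr rfl fun k hk => by rw [h k (mem_Icc.mp hk).1]

lemma binomSum_succ (w : ℕ → ℚ) (n : ℕ) :
    binomSum w (n + 1)
      = binomSum w n + binomSum (fun k => k ^ 2 * w k) (n + 1) / (n + 1) ^ 2 := by
  have hn : ((n : ℚ) + 1) ^ 2 ≠ 0 := by positivity
  have h_top : binomSum w n = ∑ k ∈ Icc 1 (n + 1), w k * binomRatio n k := by
    rw [binomSum, sum_Icc_succ_top (by omega), binomRatio_eq_zero_of_lt (Nat.lt_succ_self n),
      mul_zero, add_zero]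
  rw [h_top, binomSum, binomSum, sum_div, ← sum_add_distrib]
  refine sum_congr rfl fun k _ => ?_
  field_simp
  linear_combination -(w k) * binomRatio_mul_sq n k

theorem binomSum_eq_sum_div_sq (w : ℕ → ℚ) (n : ℕ) :
    binomSum w n = ∑ m ∈ Icc 1 n, binomSum (fun k => k ^ 2 * w k) m / m ^ 2 := by
  induction n with
  | zero => simp [binomSum]
  | succ n ih => rw [binomSum_succ, ih, sum_Icc_succ_top (by omega), Nat.cast_succ]

def trapezoidSum (u : ℕ → ℚ) (k : ℕ) : ℚ := u k + 2 * ∑ j ∈ Icc 1 (k - 1), u j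

lemma binomSum_mul_trapezoidSum (u : ℕ → ℚ) (n : ℕ) :
    binomSum (fun k => k * trapezoidSum u k) n = n * binomSum u n := by
  have h_swap : ∑ k ∈ Icc 1 n, (k * binomRatio n k) * ∑ j ∈ Icc 1 (k - 1), u j
      = ∑ j ∈ Icc 1 n, u j * ((n - j) / 2 * binomRatio n j) := by
    rw [sum_Icc_mul_sum_Icc_pred_comm]
    exact sum_congr rfl fun j hj => by rw [sum_Ioc_mul_binomRatio (mem_Icc.mp hj).2]
  calc binomSum (fun k => k * trapezoidSum u k) n
      = ∑ k ∈ Icc 1 n, k * u k * binomRatio n k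
          + 2 * ∑ k ∈ Icc 1 n, (k * binomRatio n k) * ∑ j ∈ Icc 1 (k - 1), u j := by
        rw [mul_sum, ← sum_add_distrib]
        exact sum_congr rfl fun k _ => by simp only [trapezoidSum]; ring
    _ = n * binomSum u n := by
        rw [h_swap]
        simp only [binomSum, mul_sum, ← sum_add_distrib]
        exact sum_congr rfl fun k _ => by ring

lemma mul_binomSum_neg_one_pow_mul_trapezoidSum (u : ℕ → ℚ) (n : ℕ) :
    n * binomSum (fun k => (-1) ^ k * trapezoidSum u k) n
      = binomSum (fun k => (-1) ^ k * k * u k) n := by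
  have h_swap : ∑ k ∈ Icc 1 n, ((-1) ^ k * binomRatio n k) * ∑ j ∈ Icc 1 (k - 1), u j
      = ∑ j ∈ Icc 1 n, u j * ∑ k ∈ Ioc j n, (-1) ^ k * binomRatio n k :=
    sum_Icc_mul_sum_Icc_pred_comm _ _ n
  calc n * binomSum (fun k => (-1) ^ k * trapezoidSum u k) n
      = n * (∑ k ∈ Icc 1 n, (-1) ^ k * u k * binomRatio n k
          + 2 * ∑ k ∈ Icc 1 n, ((-1) ^ k * binomRatio n k) * ∑ j ∈ Icc 1 (k - 1), u j) := by
        rw [mul_sum, ← sum_add_distrib]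
        exact congrArg _ (sum_congr rfl fun k _ => by simp only [trapezoidSum]; ring)
    _ = binomSum (fun k => (-1) ^ k * k * u k) n := by
        rw [h_swap, mul_sum, mul_add, mul_sum, mul_sum, ← sum_add_distrib]
        refine sum_congr rfl fun j hj => ?_
        linear_combination u j * mul_sum_Ioc_neg_one_pow_mul_binomRatio (mem_Icc.mp hj).2

lemma Hstar_cons_of_pos {s : ℤ} (hs : 0 < s) (n : ℕ) (l : List ℤ) :
    Hstar n (s :: l) = ∑ m ∈ Icc 1 n, Hstar m l / m ^ s.natAbs := by
  rw [Hstar]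
  exact sum_congr rfl fun m _ => by simp [aSgn, hs, inv_mul_eq_div]

lemma Hstar_two_cons {l : List ℤ} {w : ℕ → ℚ} (h : ∀ m, Hstar m l = binomSum w m) (n : ℕ) :
    Hstar n (2 :: l) = binomSum (fun k => w k / k ^ 2) n := by
  rw [Hstar_cons_of_pos two_pos, binomSum_eq_sum_div_sq]
  refine sum_congr rfl fun m _ => ?_
  rw [h, binomSum_congr fun k hk => mul_div_cancel₀ _ (by positivity)]
  rfl

lemma Hstar_replicate_two_append {l : List ℤ} {w : ℕ → ℚ} (h : ∀ m, Hstar m l = binomSum w m)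
    (a n : ℕ) : Hstar n (List.replicate a 2 ++ l) = binomSum (fun k => w k / k ^ (2 * a)) n := by
  induction a generalizing n with
  | zero => simp [h]
  | succ a ih =>
    rw [List.replicate_succ, List.cons_append, Hstar_two_cons ih]
    congr 1
    funext k
    ring

lemma Hstar_one_cons {l : List ℤ} {u : ℕ → ℚ} (h : ∀ m, Hstar m l = binomSum u m) (n : ℕ) :
    Hstar n (1 :: l) = binomSum (fun k => trapezoidSum u k / k) n := by
  rw [Hstar_cons_of_pos one_pos, binomSum_eq_sum_div_sq]
  refine sum_congr rfl fun m hm => ?_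
  have hm : (m : ℚ) ≠ 0 := by have := (mem_Icc.mp hm).1; positivity
  rw [binomSum_congr (w' := fun k => k * trapezoidSum u k) fun k hk => by field_simp,
    binomSum_mul_trapezoidSum, h, Int.natAbs_one, pow_one, sq, mul_div_mul_left _ _ hm]

lemma Hstar_three (n : ℕ) :
    Hstar n [3] = binomSum (fun k => (-1) ^ k * trapezoidSum (fun j => -2 / j) k / k ^ 2) n := by
  rw [Hstar_cons_of_pos three_pos, binomSum_eq_sum_div_sq]
  refine sum_congr rfl fun m hm => ?_
  have hm1 := (mem_Icc.mp hm).1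
  have hm : (m : ℚ) ≠ 0 := by positivity
  have h_alt : binomSum (fun k => (-1) ^ k * k * (-2 / k)) m = 1 := by
    rw [binomSum_congr (w' := fun k => -2 * (-1) ^ k) fun k hk => by field_simp, binomSum]
    simp_rw [mul_assoc]
    rw [← mul_sum, sum_neg_one_pow_mul_binomRatio hm1]
    norm_num
  have h_inv : binomSum (fun k => (-1) ^ k * trapezoidSum (fun j => -2 / j) k) m = 1 / m := by
    rw [eq_div_iff hm, mul_comm, mul_binomSum_neg_one_pow_mul_trapezoidSum, h_alt]
  rw [binomSum_congr (w' := fun k => (-1) ^ k * trapezoidSum (fun j => -2 / j) k)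
    fun k hk => mul_div_cancel₀ _ (by positivity), h_inv, Hstar]
  ring

lemma Hh_neg_cons (s m : ℕ) (l : List ℤ) :
    Hh m (-(s : ℤ) :: l) = ∑ j ∈ Icc 1 m, (-1) ^ j / (j : ℚ) ^ s * Hh (j - 1) l := by
  have h_sgn : aSgn (-(s : ℤ)) = -1 := if_neg (by omega)
  rw [Hh, h_sgn, Int.natAbs_neg, Int.natAbs_natCast]

lemma Hh_singleton_one (m : ℕ) : Hh m [1] = ∑ j ∈ Icc 1 m, 1 / (j : ℚ) := by
  simp [Hh, aSgn]

lemma trapezoidSum_weight_eq (a b k : ℕ) :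
    trapezoidSum (fun j => (-1) ^ j * trapezoidSum (fun i => -2 / i) j / j ^ 2 / j ^ (2 * b)) k
        / k / k ^ (2 * a)
      = -2 * (-1) ^ k / (k : ℚ) ^ (2 * (a + b) + 4)
        - 4 * Hh (k - 1) [-(2 * (b : ℤ) + 3)] / k ^ (2 * a + 1)
        - 4 * Hh (k - 1) [1] * (-1) ^ k / k ^ (2 * a + 2 * b + 3)
        - 8 * Hh (k - 1) [-(2 * (b : ℤ) + 2), 1] / k ^ (2 * a + 1) := by
  have h_inner (j : ℕ) : trapezoidSum (fun i => -2 / i) j = -2 / j - 4 * Hh (j - 1) [1] := by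
    rw [trapezoidSum, Hh_singleton_one, mul_sum, mul_sum, sub_eq_add_neg, ← sum_neg_distrib]
    exact congrArg _ (sum_congr rfl fun i _ => by ring)
  have h_odd : Hh (k - 1) [-(2 * (b : ℤ) + 3)]
      = ∑ j ∈ Icc 1 (k - 1), (-1) ^ j / (j : ℚ) ^ (2 * b + 3) := by
    rw [show -(2 * (b : ℤ) + 3) = -((2 * b + 3 : ℕ) : ℤ) by push_cast; ring, Hh_neg_cons]
    simp [Hh]
  have h_even : Hh (k - 1) [-(2 * (b : ℤ) + 2), 1]
      = ∑ j ∈ Icc 1 (k - 1), (-1) ^ j / (j : ℚ) ^ (2 * b + 2) * Hh (j - 1) [1] := by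
    rw [show -(2 * (b : ℤ) + 2) = -((2 * b + 2 : ℕ) : ℤ) by push_cast; ring, Hh_neg_cons]
  have h_outer :
      ∑ j ∈ Icc 1 (k - 1), (-1) ^ j * trapezoidSum (fun i => -2 / (i : ℚ)) j / j ^ 2 / j ^ (2 * b)
        = -2 * Hh (k - 1) [-(2 * (b : ℤ) + 3)] - 4 * Hh (k - 1) [-(2 * (b : ℤ) + 2), 1] := by
    rw [h_odd, h_even, mul_sum, mul_sum, ← sum_sub_distrib]
    exact sum_congr rfl fun j _ => by rw [h_inner]; ring
  rw [trapezoidSum, h_outer, h_inner]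
  ring

theorem stmt12_general (n a b : ℕ) :
    Hstar n (List.replicate a 2 ++ [1] ++ List.replicate b 2 ++ [3])
      = -2 * ∑ k ∈ Finset.Icc 1 n,
            (-1 : ℚ) ^ k * (n.choose k) / ((k : ℚ) ^ (2*(a+b)+4) * ((n+k).choose k))
        - 4 * ∑ k ∈ Finset.Icc 1 n,
            Hh (k-1) [-(2 * (b : ℤ) + 3)] * (n.choose k)
              / ((k : ℚ) ^ (2*a+1) * ((n+k).choose k))
        - 4 * ∑ k ∈ Finset.Icc 1 n,
            Hh (k-1) [1] * (-1 : ℚ) ^ k * (n.choose k)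
              / ((k : ℚ) ^ (2*a+2*b+3) * ((n+k).choose k))
        - 8 * ∑ k ∈ Finset.Icc 1 n,
            Hh (k-1) [-(2 * (b : ℤ) + 2), 1] * (n.choose k)
              / ((k : ℚ) ^ (2*a+1) * ((n+k).choose k)) := by
  rw [List.append_assoc, List.append_assoc, List.singleton_append, Hstar_replicate_two_append
    (Hstar_one_cons (Hstar_replicate_two_append Hstar_three b)) a n]
  simp only [trapezoidSum_weight_eq, binomSum, binomRatio, mul_sum, ← sum_sub_distrib]
  exact sum_congr rfl fun k _ => by ring

theorem stmt12 (n a b : ℕ) (hn : 1 ≤ n) :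
    Hstar n (List.replicate a 2 ++ [1] ++ List.replicate b 2 ++ [3])
      = -2 * ∑ k ∈ Finset.Icc 1 n,
            (-1 : ℚ) ^ k * (n.choose k) / ((k : ℚ) ^ (2*(a+b)+4) * ((n+k).choose k))
        - 4 * ∑ k ∈ Finset.Icc 1 n,
            Hh (k-1) [-(2 * (b : ℤ) + 3)] * (n.choose k)
              / ((k : ℚ) ^ (2*a+1) * ((n+k).choose k))
        - 4 * ∑ k ∈ Finset.Icc 1 n,
            Hh (k-1) [1] * (-1 : ℚ) ^ k * (n.choose k)
              / ((k : ℚ) ^ (2*a+2*b+3) * ((n+k).choose k))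
        - 8 * ∑ k ∈ Finset.Icc 1 n,
            Hh (k-1) [-(2 * (b : ℤ) + 2), 1] * (n.choose k)
              / ((k : ℚ) ^ (2*a+1) * ((n+k).choose k)) :=
  stmt12_general n a b
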